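/- arXiv:2502.13060 — 2 statements merged into one kernel-verified Lean document; each statement's English description precedes it below -/
import Mathlib

section
/- Let R be a finite ring with |R| ≥ 2 elements (or a finite field). Let P and Q be a×b matrices over R with P ≠ Q. If x is drawn uniformly at random from R^b, then the probability that P x = Q x is at most 1/|R|. -/
open Matrix

/-! The vectors on which `P` and `Q` agree form the kernel of the nonzero linear map
`x ↦ (P - Q) x`. By the first isomorphism theorem `|ker| · |range| = |F^b|`, and a nonzero
range contains a line `F • v`, so it has at least `|F|` elements. -/

theorem LinearMap.card_ker_mul_card_range {R M N : Type*} [Ring R] [AddCommGroup M] [Module R M]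
    [AddCommGroup N] [Module R N] (f : M →ₗ[R] N) :
    Nat.card (ker f) * Nat.card (range f) = Nat.card M := by
  rw [Submodule.card_eq_card_quotient_mul_card (ker f), Nat.card_congr f.quotKerEquivRange.toEquiv]

theorem Submodule.card_le_card_of_ne_bot {K V : Type*} [Field K] [AddCommGroup V] [Module K V]
    {S : Submodule K V} [Finite S] (hS : S ≠ ⊥) : Nat.card K ≤ Nat.card S := by
  obtain ⟨v, hvS, hv⟩ := S.ne_bot_iff.mp hS
  exact Nat.card_le_card_of_injective (fun c : K => (⟨c • v, S.smul_mem c hvS⟩ : S))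
    fun c d h => smul_left_injective K hv (congrArg Subtype.val h)

theorem LinearMap.card_ker_mul_card_le {K V W : Type*} [Field K] [AddCommGroup V] [Module K V]
    [Finite V] [AddCommGroup W] [Module K W] {f : V →ₗ[K] W} (hf : f ≠ 0) :
    Nat.card (ker f) * Nat.card K ≤ Nat.card V := by
  have : Finite (range f) := Finite.of_surjective _ f.surjective_rangeRestrict
  rw [← f.card_ker_mul_card_range]
  exact Nat.mul_le_mul_left _ (Submodule.card_le_card_of_ne_bot (range_eq_bot.not.mpr hf))

/-- Freivalds check, single random vector: if `P ≠ Q` are `a×b` matrices over a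
finite field `F` and `x` is uniform in `F^b`, then `Pr[P x = Q x] ≤ 1/|F|`. -/
theorem stmt_2 {F : Type*} [Field F] [Fintype F] [DecidableEq F] {a b : ℕ}
    (P Q : Matrix (Fin a) (Fin b) F) (hPQ : P ≠ Q) :
    ((Finset.univ.filter (fun x : Fin b → F => P.mulVec x = Q.mulVec x)).card : ℝ)
      / (Fintype.card (Fin b → F) : ℝ) ≤ 1 / (Fintype.card F : ℝ) := by
  have hker : (Finset.univ.filter (fun x : Fin b → F => P.mulVec x = Q.mulVec x)).card
      = Nat.card (LinearMap.ker (toLin' (P - Q))) := by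
    rw [← Fintype.card_subtype, ← Nat.card_eq_fintype_card]
    refine Nat.card_congr (Equiv.subtypeEquivRight fun x => ?_)
    simp [sub_eq_zero]
  have hne : toLin' (P - Q) ≠ 0 := (LinearEquiv.map_ne_zero_iff _).mpr (sub_ne_zero.mpr hPQ)
  rw [hker, div_le_div_iff₀ (by positivity) (by positivity), one_mul,
    Fintype.card_eq_nat_card, Fintype.card_eq_nat_card]
  exact_mod_cast LinearMap.card_ker_mul_card_le hne
end

section
/- Let F be a finite field and M₁,…,M_d matrices with M_i of shape a_i × a_{i+1}, and claimed partial products P₂,…,P_d with P_i of shape a₁ × a_{i+1}. Set P₁ = M₁. If for every i ∈ {2,…,d} one samples an independent uniform a_{i+1}×λ' matrix X_i over F and verifies P_i X_i = P_{i−1}(M_i X_i), then: (completeness) if P_i = M₁M₂⋯M_i for all i, all checks pass; (soundness) if P_i ≠ M₁M₂⋯M_i for some i, then the probability that all checks pass is at most (d−1)·|F|^{−λ'}. -/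
open Matrix
open scoped Classical

/-- Freivalds counting lemma: if `A ≠ 0`, then the number of `X` with `A * X = 0`
times `|F|^lam` is at most the number of all `X`. -/
lemma freivalds_count {F : Type*} [Field F] [Fintype F] [DecidableEq F]
    {m n lam : ℕ} (A : Matrix (Fin m) (Fin n) F) (hA : A ≠ 0) :
    (Finset.univ.filter (fun X : Matrix (Fin n) (Fin lam) F => A * X = 0)).card
      * Fintype.card F ^ lam
      ≤ Fintype.card (Matrix (Fin n) (Fin lam) F) := by
  obtain ⟨k, l, hkl⟩ : ∃ k l, A k l ≠ 0 := by
    by_contra h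
    push_neg at h
    exact hA (by ext k l; exact h k l)
  classical
  set E : (Fin lam → F) → Matrix (Fin n) (Fin lam) F :=
    fun v => Matrix.of (fun l' c => if l' = l then (A k l)⁻¹ * v c else 0) with hE
  have hAE : ∀ v c, (A * E v) k c = v c := by
    intro v c
    simp only [Matrix.mul_apply, hE, Matrix.of_apply, mul_ite, mul_zero]
    rw [Finset.sum_ite_eq' Finset.univ l]
    simp [mul_inv_cancel_left₀ hkl]
  have key : Set.InjOn
      (fun p : Matrix (Fin n) (Fin lam) F × (Fin lam → F) => p.1 + E p.2)
      (((Finset.univ.filter (fun X : Matrix (Fin n) (Fin lam) F => A * X = 0))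
        ×ˢ (Finset.univ : Finset (Fin lam → F))) : Finset _) := by
    intro p hp p' hp' heq
    obtain ⟨hp, -⟩ := Finset.mem_product.mp (Finset.mem_coe.mp hp)
    obtain ⟨hp', -⟩ := Finset.mem_product.mp (Finset.mem_coe.mp hp')
    rw [Finset.mem_filter] at hp hp'
    replace hp := hp.2
    replace hp' := hp'.2
    have hv : p.2 = p'.2 := by
      funext c
      have h1 := congrArg (fun Y => (A * Y) k c) heq
      simpa [Matrix.mul_add, hp, hp', hAE] using h1
    have hX : p.1 = p'.1 := by
      have := heq
      simp only at this
      rw [hv] at this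
      exact add_right_cancel this
    exact Prod.ext hX hv
  have hle := Finset.card_le_card_of_injOn
    (t := (Finset.univ : Finset (Matrix (Fin n) (Fin lam) F)))
    _ (fun p _ => Finset.mem_univ _) key
  simpa [Finset.card_product, Fintype.card_fun] using hle

/-- Splitting a filtered count over a dependent product at one coordinate. -/
lemma card_filter_pi {ι : Type*} [Fintype ι] [DecidableEq ι]
    (T : ι → Type*) [∀ i, Fintype (T i)] (j₀ : ι) (q : T j₀ → Prop) [DecidablePred q] :
    (Finset.univ.filter (fun X : (j : ι) → T j => q (X j₀))).card
      = (Finset.univ.filter q).card * Fintype.card ((j : { j // j ≠ j₀ }) → T j) := by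
  classical
  have e1 : { X : (j : ι) → T j // q (X j₀) }
      ≃ { p : T j₀ × ((j : { j // j ≠ j₀ }) → T j) // q p.1 } :=
    (Equiv.piSplitAt j₀ T).subtypeEquiv (fun X => Iff.rfl)
  have e2 : { p : T j₀ × ((j : { j // j ≠ j₀ }) → T j) // q p.1 }
      ≃ { y : T j₀ // q y } × ((j : { j // j ≠ j₀ }) → T j) :=
    { toFun := fun p => (⟨p.1.1, p.2⟩, p.1.2)
      invFun := fun p => ⟨(p.1.1, p.2), p.1.2⟩
      left_inv := fun p => rfl
      right_inv := fun p => rfl }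
  calc (Finset.univ.filter (fun X : (j : ι) → T j => q (X j₀))).card
      = Fintype.card { X : (j : ι) → T j // q (X j₀) } :=
        (Fintype.card_subtype _).symm
    _ = Fintype.card ({ y : T j₀ // q y } × ((j : { j // j ≠ j₀ }) → T j)) :=
        Fintype.card_congr (e1.trans e2)
    _ = (Finset.univ.filter q).card * Fintype.card ((j : { j // j ≠ j₀ }) → T j) := by
        rw [Fintype.card_prod, Fintype.card_subtype]

/-- The chain of partial products `M₁ M₂ ⋯ M_i` (empty product is the identity,
so `chainProd M 0 = 1` and `chainProd M i = M₁ ⋯ M_i`). -/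
def chainProd {F : Type*} [Field F] (a : ℕ → ℕ)
    (M : (i : ℕ) → Matrix (Fin (a i)) (Fin (a (i + 1))) F) :
    (i : ℕ) → Matrix (Fin (a 1)) (Fin (a (i + 1))) F
  | 0 => 1
  | i + 1 => chainProd a M i * M (i + 1)

/-- Iterated Freivalds verification of partial products over a finite field:
completeness (correct partial products always pass) and soundness (if some
`P i ≠ M₁⋯M_i`, then the fraction of random test-matrix tuples on which all
checks pass is at most `(d−1)·|F|^{−λ'}`). -/
theorem stmt_4 {F : Type*} [Field F] [Fintype F] [DecidableEq F]
    (d lam : ℕ) (hd : 1 ≤ d) (a : ℕ → ℕ)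
    (M : (i : ℕ) → Matrix (Fin (a i)) (Fin (a (i + 1))) F)
    (P : (i : ℕ) → Matrix (Fin (a 1)) (Fin (a (i + 1))) F)
    (hP1 : P 1 = M 1) :
    -- completeness
    ((∀ i, 2 ≤ i → i ≤ d → P i = chainProd a M i) →
      ∀ X : (j : Fin (d - 1)) → Matrix (Fin (a (j.val + 3))) (Fin lam) F,
        ∀ j : Fin (d - 1),
          P (j.val + 2) * X j = P (j.val + 1) * (M (j.val + 2) * X j)) ∧
    -- soundness
    ((∃ i, 2 ≤ i ∧ i ≤ d ∧ P i ≠ chainProd a M i) →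
      ((Finset.univ.filter
          (fun X : (j : Fin (d - 1)) → Matrix (Fin (a (j.val + 3))) (Fin lam) F =>
            ∀ j : Fin (d - 1),
              P (j.val + 2) * X j = P (j.val + 1) * (M (j.val + 2) * X j))).card : ℝ)
        / (Fintype.card
            ((j : Fin (d - 1)) → Matrix (Fin (a (j.val + 3))) (Fin lam) F) : ℝ)
        ≤ (d - 1 : ℝ) * ((Fintype.card F : ℝ))⁻¹ ^ lam) := by
  have hchain1 : chainProd a M 1 = M 1 := by
    show chainProd a M 0 * M 1 = M 1
    rw [show chainProd a M 0 = 1 from rfl, Matrix.one_mul]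
  constructor
  · -- completeness
    intro h X j
    have hj := j.isLt
    have h2 : P (j.val + 2) = chainProd a M (j.val + 2) := h _ (by omega) (by omega)
    have h1 : P (j.val + 1) = chainProd a M (j.val + 1) := by
      rcases Nat.eq_zero_or_pos j.val with hz | hpos
      · rw [hz]; rw [hP1, hchain1]
      · exact h _ (by omega) (by omega)
    rw [h2, h1]
    show chainProd a M (j.val + 1) * M (j.val + 2) * X j = _
    rw [Matrix.mul_assoc]
  · -- soundness
    intro hex
    have hEx : ∃ i, 2 ≤ i ∧ i ≤ d ∧ P i ≠ chainProd a M i := hex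
    set i₀ := Nat.find hEx with hi₀
    obtain ⟨hi2, hid, hibad⟩ := Nat.find_spec hEx
    rw [← hi₀] at hi2 hid hibad
    have hd2 : 2 ≤ d := le_trans hi2 hid
    -- P (i₀ - 1) is correct
    have hprev : P (i₀ - 1) = chainProd a M (i₀ - 1) := by
      rcases Nat.lt_or_ge i₀ 3 with h3 | h3
      · have : i₀ = 2 := by omega
        rw [this]; rw [hP1, hchain1]
      · by_contra hne
        exact absurd ⟨by omega, by omega, hne⟩ (Nat.find_min hEx (by omega))
    obtain ⟨k, hk⟩ : ∃ k, i₀ = k + 2 := ⟨i₀ - 2, by omega⟩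
    rw [hk] at hprev hibad hid
    have hprev' : P (k + 1) = chainProd a M (k + 1) := hprev
    -- the discrepancy matrix
    set A : Matrix (Fin (a 1)) (Fin (a (k + 3))) F :=
      P (k + 2) - P (k + 1) * M (k + 2) with hA
    have hAne : A ≠ 0 := by
      rw [hA, sub_ne_zero]
      intro habs
      apply hibad
      show P (k + 2) = chainProd a M (k + 1) * M (k + 2)
      rw [habs, hprev']
    set j₀ : Fin (d - 1) := ⟨k, by omega⟩ with hj₀
    set T : Fin (d - 1) → Type _ :=
      fun j => Matrix (Fin (a (j.val + 3))) (Fin lam) F with hT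
    -- every passing X satisfies A * X j₀ = 0
    have hsub : (Finset.univ.filter
          (fun X : (j : Fin (d - 1)) → T j =>
            ∀ j : Fin (d - 1),
              P (j.val + 2) * X j = P (j.val + 1) * (M (j.val + 2) * X j)))
        ⊆ Finset.univ.filter (fun X : (j : Fin (d - 1)) → T j => A * X j₀ = 0) := by
      intro X hX
      simp only [Finset.mem_filter, Finset.mem_univ, true_and] at hX ⊢
      have := hX j₀
      rw [hA, Matrix.sub_mul, sub_eq_zero, ← Matrix.mul_assoc] at *
      exact this
    -- counting
    have hcount := card_filter_pi T j₀ (fun Y => A * Y = 0)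
    have hfre := freivalds_count (lam := lam) A hAne
    set N := (Finset.univ.filter
        (fun X : (j : Fin (d - 1)) → T j =>
          ∀ j : Fin (d - 1),
            P (j.val + 2) * X j = P (j.val + 1) * (M (j.val + 2) * X j))).card with hN
    set C := Fintype.card ((j : Fin (d - 1)) → T j) with hC
    have hCsplit : C = Fintype.card (T j₀)
        * Fintype.card ((j : { j // j ≠ j₀ }) → T j) := by
      rw [hC, Fintype.card_congr (Equiv.piSplitAt j₀ T), Fintype.card_prod]
    have hmain : N * Fintype.card F ^ lam ≤ C := by
      calc N * Fintype.card F ^ lam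
          ≤ (Finset.univ.filter (fun X : (j : Fin (d - 1)) → T j => A * X j₀ = 0)).card
              * Fintype.card F ^ lam := by
            exact Nat.mul_le_mul_right _ (Finset.card_le_card hsub)
        _ = (Finset.univ.filter (fun Y : T j₀ => A * Y = 0)).card
              * Fintype.card ((j : { j // j ≠ j₀ }) → T j)
              * Fintype.card F ^ lam := by rw [hcount]
        _ = ((Finset.univ.filter (fun Y : T j₀ => A * Y = 0)).card
              * Fintype.card F ^ lam)
              * Fintype.card ((j : { j // j ≠ j₀ }) → T j) := by ring
        _ ≤ Fintype.card (T j₀) * Fintype.card ((j : { j // j ≠ j₀ }) → T j) :=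
            Nat.mul_le_mul_right _ hfre
        _ = C := hCsplit.symm
    -- pass to reals
    have hCpos : (0 : ℝ) < C := by
      have : 0 < C := Fintype.card_pos
      exact_mod_cast this
    have hFpos : (0 : ℝ) < (Fintype.card F : ℝ) ^ lam := by
      have : 0 < Fintype.card F := Fintype.card_pos
      positivity
    have hmainR : (N : ℝ) * (Fintype.card F : ℝ) ^ lam ≤ C := by
      exact_mod_cast hmain
    have h1 : (N : ℝ) / C ≤ ((Fintype.card F : ℝ))⁻¹ ^ lam := by
      rw [inv_pow, inv_eq_one_div, div_le_div_iff₀ hCpos (by positivity)]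
      nlinarith [hmainR]
    have hfac : (1 : ℝ) ≤ (d : ℝ) - 1 := by
      have : (2 : ℝ) ≤ (d : ℝ) := by exact_mod_cast hd2
      linarith
    have hnn : (0 : ℝ) ≤ ((Fintype.card F : ℝ))⁻¹ ^ lam := by positivity
    calc (N : ℝ) / C ≤ ((Fintype.card F : ℝ))⁻¹ ^ lam := h1
      _ = 1 * ((Fintype.card F : ℝ))⁻¹ ^ lam := (one_mul _).symm
      _ ≤ ((d : ℝ) - 1) * ((Fintype.card F : ℝ))⁻¹ ^ lam :=
          mul_le_mul_of_nonneg_right hfac hnn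
end
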